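/- arXiv:1702.05084 — 4 statements merged into one kernel-verified Lean document; each statement's English description precedes it below -/
import Mathlib

section
/- Let k, m be positive natural numbers, let A, B, C, D be time-dependent coefficient matrices as in the linear base and auxiliary system, and let G₀ ∈ Matrix (Fin m) (Fin k) ℂ be given initial data. Suppose Q : ℝ → Matrix (Fin k) (Fin k) ℂ and P : ℝ → Matrix (Fin m) (Fin k) ℂ satisfy, for every t ≥ 0, HasDerivAt Q (A t * Q t + B t * P t) t and HasDerivAt P (C t * Q t + D t * P t) t, with initial data Q 0 = 1 (the identity matrix) and P 0 = G₀. Then there exists T > 0 such that Q t is invertible for every t ∈ [0, T), and the function G : t ↦ P t * (Q t)⁻¹ satisfies G 0 = G₀ and, for every t ∈ [0, T), HasDerivAt G (C t + D t * G t - G t * (A t + B t * G t)) t. -/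
/-! Since `Q 0 = 1` and the invertible matrices form an open set, `Q t` stays invertible for small
`t`. There the quotient rule gives `(P Q⁻¹)' = (P' - G Q') Q⁻¹` with `G = P Q⁻¹`, and substituting
`Q' = AQ + BP`, `P' = CQ + DP` and cancelling `Q Q⁻¹ = 1` yields `C + DG - G(A + BG)`. -/

attribute [local instance] Matrix.frobeniusNormedAddCommGroup Matrix.frobeniusNormedSpace

attribute [local instance] Matrix.frobeniusNormedRing Matrix.frobeniusNormedAlgebra

theorem HasDerivAt.ringInverse {𝕜 R : Type*} [NontriviallyNormedField 𝕜] [NormedRing R]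
    [HasSummableGeomSeries R] [NormedAlgebra 𝕜 R] {g : 𝕜 → R} {g' : R} {t : 𝕜}
    (hg : HasDerivAt g g' t) (ht : IsUnit (g t)) :
    HasDerivAt (fun s => Ring.inverse (g s))
      (-(Ring.inverse (g t) * g' * Ring.inverse (g t))) t := by
  obtain ⟨u, hu⟩ := ht
  simpa [← hu, Ring.inverse_unit] using (hu ▸ hasFDerivAt_ringInverse u).comp_hasDerivAt t hg

section Matrix

variable {𝕜 α : Type*} {l m n : Type*} [Fintype l] [Fintype m] [Fintype n]

theorem HasDerivAt.matrix_mul [NontriviallyNormedField 𝕜] [CompleteSpace 𝕜] [NormedRing α]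
    [NormedAlgebra 𝕜 α] [FiniteDimensional 𝕜 α]
    {f : 𝕜 → Matrix l m α} {g : 𝕜 → Matrix m n α} {f' : Matrix l m α} {g' : Matrix m n α}
    {t : 𝕜} (hf : HasDerivAt f f' t) (hg : HasDerivAt g g' t) :
    HasDerivAt (fun s => f s * g s) (f' * g t + f t * g') t := by
  rw [add_comm]
  exact (mulLinearMap 𝕜).toContinuousBilinearMap.hasDerivAt_of_bilinear
    (fun _ => hf) (fun _ => hg)

theorem HasDerivAt.matrix_mul_inv [NontriviallyNormedField 𝕜] [CompleteSpace 𝕜] [RCLike α]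
    [NormedAlgebra 𝕜 α] [FiniteDimensional 𝕜 α] [DecidableEq n]
    {f : 𝕜 → Matrix m n α} {g : 𝕜 → Matrix n n α} {f' : Matrix m n α} {g' : Matrix n n α}
    {t : 𝕜} (hf : HasDerivAt f f' t) (hg : HasDerivAt g g' t) (ht : IsUnit (g t)) :
    HasDerivAt (fun s => f s * (g s)⁻¹) ((f' - f t * (g t)⁻¹ * g') * (g t)⁻¹) t := by
  simp only [Matrix.nonsing_inv_eq_ringInverse]
  have hinv := HasDerivAt.ringInverse (g := g) hg ht
  convert hf.matrix_mul hinv using 1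
  simp only [sub_eq_add_neg, Matrix.add_mul, Matrix.neg_mul, Matrix.mul_neg, Matrix.mul_assoc]

end Matrix

theorem matrix_riccati_solution_from_linear_data_general
    (k m : ℕ)
    (A : ℝ → Matrix (Fin k) (Fin k) ℂ) (B : ℝ → Matrix (Fin k) (Fin m) ℂ)
    (C : ℝ → Matrix (Fin m) (Fin k) ℂ) (D : ℝ → Matrix (Fin m) (Fin m) ℂ)
    (G₀ : Matrix (Fin m) (Fin k) ℂ)
    (Q : ℝ → Matrix (Fin k) (Fin k) ℂ) (P : ℝ → Matrix (Fin m) (Fin k) ℂ)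
    (hQ : ∀ t : ℝ, 0 ≤ t → HasDerivAt Q (A t * Q t + B t * P t) t)
    (hP : ∀ t : ℝ, 0 ≤ t → HasDerivAt P (C t * Q t + D t * P t) t)
    (hQ0 : Q 0 = 1) (hP0 : P 0 = G₀) :
    ∃ T : ℝ, 0 < T ∧
      (∀ t ∈ Set.Ico (0 : ℝ) T, IsUnit (Q t)) ∧
      P 0 * (Q 0)⁻¹ = G₀ ∧
      ∀ t ∈ Set.Ico (0 : ℝ) T,
        HasDerivAt (fun s => P s * (Q s)⁻¹)
          (C t + D t * (P t * (Q t)⁻¹)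
            - (P t * (Q t)⁻¹) * (A t + B t * (P t * (Q t)⁻¹))) t := by
  have hunit_near : ∀ᶠ t in nhds 0, IsUnit (Q t) :=
    (hQ 0 le_rfl).continuousAt.eventually (Units.isOpen.mem_nhds (hQ0 ▸ isUnit_one))
  obtain ⟨T, hT, hunit⟩ :=
    mem_nhdsGE_iff_exists_Ico_subset.1 (nhdsWithin_le_nhds hunit_near)
  refine ⟨T, hT, hunit, by rw [hQ0, hP0, inv_one, Matrix.mul_one], fun t ht => ?_⟩
  have hQQ : Q t * (Q t)⁻¹ = 1 := Matrix.mul_nonsing_inv _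
    ((Matrix.isUnit_iff_isUnit_det _).1 (hunit ht))
  convert (hP t ht.1).matrix_mul_inv (hQ t ht.1) (hunit ht) using 1
  simp only [Matrix.sub_mul, Matrix.add_mul, Matrix.mul_add, Matrix.mul_assoc, hQQ, Matrix.mul_one]

/-- Given a solution of the linear base and auxiliary matrix system
`∂ₜQ = AQ + BP`, `∂ₜP = CQ + DP` with data `Q 0 = 1`, `P 0 = G₀`, there is a
time `T > 0` on which `Q t` is invertible and `G = P Q⁻¹` solves the matrix
Riccati equation `∂ₜG = C + DG − G(A + BG)` with `G 0 = G₀`. -/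
theorem matrix_riccati_solution_from_linear_data
    (k m : ℕ) (hk : 0 < k) (hm : 0 < m)
    (A : ℝ → Matrix (Fin k) (Fin k) ℂ) (B : ℝ → Matrix (Fin k) (Fin m) ℂ)
    (C : ℝ → Matrix (Fin m) (Fin k) ℂ) (D : ℝ → Matrix (Fin m) (Fin m) ℂ)
    (G₀ : Matrix (Fin m) (Fin k) ℂ)
    (Q : ℝ → Matrix (Fin k) (Fin k) ℂ) (P : ℝ → Matrix (Fin m) (Fin k) ℂ)
    (hQ : ∀ t : ℝ, 0 ≤ t → HasDerivAt Q (A t * Q t + B t * P t) t)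
    (hP : ∀ t : ℝ, 0 ≤ t → HasDerivAt P (C t * Q t + D t * P t) t)
    (hQ0 : Q 0 = 1) (hP0 : P 0 = G₀) :
    ∃ T : ℝ, 0 < T ∧
      (∀ t ∈ Set.Ico (0 : ℝ) T, IsUnit (Q t)) ∧
      P 0 * (Q 0)⁻¹ = G₀ ∧
      ∀ t ∈ Set.Ico (0 : ℝ) T,
        HasDerivAt (fun s => P s * (Q s)⁻¹)
          (C t + D t * (P t * (Q t)⁻¹)
            - (P t * (Q t)⁻¹) * (A t + B t * (P t * (Q t)⁻¹))) t :=
  matrix_riccati_solution_from_linear_data_general k m A B C D G₀ Q P hQ hP hQ0 hP0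
end

section
/- Let V and W be complex Banach spaces, let A : ℝ → (V →L[ℂ] V), B : ℝ → (W →L[ℂ] V), C : ℝ → (V →L[ℂ] W), D : ℝ → (W →L[ℂ] W) be families of bounded operators, and let G₀ ∈ V →L[ℂ] W be given initial data. Suppose Q : [0, ∞) → (V →L[ℂ] V) and P : [0, ∞) → (V →L[ℂ] W) satisfy, for every t ≥ 0, HasDerivAt Q (A t ∘ Q t + B t ∘ P t) t and HasDerivAt P (C t ∘ Q t + D t ∘ P t) t (derivatives in operator norm), with Q 0 = id and P 0 = G₀. Then there exists T > 0 such that Q t is invertible in V →L[ℂ] V for all t ∈ [0, T), and G : t ↦ P t ∘ (Q t)⁻¹ satisfies G 0 = G₀ and, for every t ∈ [0, T), HasDerivAt G (C t + D t ∘ G t - G t ∘ (A t + B t ∘ G t)) t. -/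
/-!
Since `Q 0 = id` is a unit and the units of a Banach algebra form an open set, continuity of `Q`
keeps `Q t` invertible on some `[0, T)`. There the quotient rule gives
`(P Q⁻¹)' = (P' - P Q⁻¹ Q') Q⁻¹`, and substituting `Q' = A Q + B P`, `P' = C Q + D P` and
cancelling `Q Q⁻¹` turns this into `C + D G - G (A + B G)` for `G = P Q⁻¹`.
-/

open ContinuousLinearMap

theorem HasDerivAt.clm_comp_of_isScalarTower {𝕜 𝕜' : Type*} [NontriviallyNormedField 𝕜]
    [NontriviallyNormedField 𝕜'] [NormedAlgebra 𝕜 𝕜'] {E F G : Type*} [NormedAddCommGroup E]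
    [NormedSpace 𝕜' E] [NormedAddCommGroup F] [NormedSpace 𝕜 F] [NormedSpace 𝕜' F]
    [IsScalarTower 𝕜 𝕜' F] [NormedAddCommGroup G] [NormedSpace 𝕜 G] [NormedSpace 𝕜' G]
    [IsScalarTower 𝕜 𝕜' G] {x : 𝕜} {c : 𝕜 → F →L[𝕜'] G} {c' : F →L[𝕜'] G}
    {d : 𝕜 → E →L[𝕜'] F} {d' : E →L[𝕜'] F} (hc : HasDerivAt c c' x) (hd : HasDerivAt d d' x) :
    HasDerivAt (fun y => (c y).comp (d y)) (c'.comp (d x) + (c x).comp d') x := by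
  simpa [add_comm] using
    ((compL 𝕜' E F G).bilinearRestrictScalars 𝕜).hasDerivAt_of_bilinear (fun _ => hc) (fun _ => hd)

theorem HasDerivAt.ringInverse_s5 {𝕜 𝕜' R : Type*} [NontriviallyNormedField 𝕜]
    [NontriviallyNormedField 𝕜'] [NormedAlgebra 𝕜 𝕜'] [NormedRing R]
    [HasSummableGeomSeries R] [NormedAlgebra 𝕜' R] [NormedSpace 𝕜 R] [IsScalarTower 𝕜 𝕜' R]
    {f : 𝕜 → R} {f' : R} {x : 𝕜} (hf : HasDerivAt f f' x) (hx : IsUnit (f x)) :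
    HasDerivAt (fun y => Ring.inverse (f y))
      (-(Ring.inverse (f x) * f' * Ring.inverse (f x))) x := by
  obtain ⟨u, hu⟩ := hx
  have hinv : HasFDerivAt Ring.inverse (-mulLeftRight 𝕜' R ↑u⁻¹ ↑u⁻¹) (f x) :=
    hu ▸ hasFDerivAt_ringInverse u
  have hfx : Ring.inverse (f x) = ↑u⁻¹ := hu ▸ Ring.inverse_unit u
  simpa [hfx, Function.comp_def] using (hinv.restrictScalars 𝕜).comp_hasDerivAt x hf

theorem HasDerivAt.clm_comp_ringInverse {𝕜 𝕜' : Type*} [NontriviallyNormedField 𝕜]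
    [NontriviallyNormedField 𝕜'] [NormedAlgebra 𝕜 𝕜'] {E F : Type*} [NormedAddCommGroup E]
    [NormedSpace 𝕜 E] [NormedSpace 𝕜' E] [IsScalarTower 𝕜 𝕜' E] [CompleteSpace E]
    [NormedAddCommGroup F] [NormedSpace 𝕜 F] [NormedSpace 𝕜' F] [IsScalarTower 𝕜 𝕜' F]
    {P : 𝕜 → E →L[𝕜'] F} {P' : E →L[𝕜'] F} {Q : 𝕜 → E →L[𝕜'] E} {Q' : E →L[𝕜'] E} {x : 𝕜}
    (hP : HasDerivAt P P' x) (hQ : HasDerivAt Q Q' x) (hQx : IsUnit (Q x)) :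
    HasDerivAt (fun y => (P y).comp (Ring.inverse (Q y)))
      ((P' - ((P x).comp (Ring.inverse (Q x))).comp Q').comp (Ring.inverse (Q x))) x := by
  convert hP.clm_comp_of_isScalarTower (hQ.ringInverse_s5 (𝕜' := 𝕜') hQx) using 1
  simp [mul_def, comp_assoc, sub_eq_add_neg]

theorem ContinuousLinearMap.comp_ringInverse_eq_riccati {R E F : Type*} [Ring R]
    [TopologicalSpace E] [AddCommGroup E] [IsTopologicalAddGroup E] [Module R E]
    [TopologicalSpace F] [AddCommGroup F] [IsTopologicalAddGroup F] [Module R F]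
    {A : E →L[R] E} {B : F →L[R] E} {C : E →L[R] F} {D : F →L[R] F} {P : E →L[R] F}
    {Q : E →L[R] E} (hQ : IsUnit Q) :
    (C.comp Q + D.comp P - (P.comp (Ring.inverse Q)).comp (A.comp Q + B.comp P)).comp
        (Ring.inverse Q) =
      C + D.comp (P.comp (Ring.inverse Q)) -
        (P.comp (Ring.inverse Q)).comp (A + B.comp (P.comp (Ring.inverse Q))) := by
  have hQQ : Q.comp (Ring.inverse Q) = .id R E := Ring.mul_inverse_cancel Q hQ
  simp only [sub_comp, add_comp, comp_add, comp_assoc, hQQ, comp_id]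

theorem operator_riccati_solution_from_linear_data_general
    {V W : Type*} [NormedAddCommGroup V] [NormedSpace ℂ V] [CompleteSpace V]
    [NormedAddCommGroup W] [NormedSpace ℂ W]
    (A : ℝ → V →L[ℂ] V) (B : ℝ → W →L[ℂ] V)
    (C : ℝ → V →L[ℂ] W) (D : ℝ → W →L[ℂ] W)
    (G₀ : V →L[ℂ] W)
    (Q : ℝ → V →L[ℂ] V) (P : ℝ → V →L[ℂ] W)
    (hQ : ∀ t : ℝ, 0 ≤ t → HasDerivAt Q ((A t).comp (Q t) + (B t).comp (P t)) t)
    (hP : ∀ t : ℝ, 0 ≤ t → HasDerivAt P ((C t).comp (Q t) + (D t).comp (P t)) t)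
    (hQ0 : Q 0 = ContinuousLinearMap.id ℂ V) (hP0 : P 0 = G₀) :
    ∃ T : ℝ, 0 < T ∧
      (∀ t ∈ Set.Ico (0 : ℝ) T, IsUnit (Q t)) ∧
      (P 0).comp (Ring.inverse (Q 0)) = G₀ ∧
      ∀ t ∈ Set.Ico (0 : ℝ) T,
        HasDerivAt (fun s => (P s).comp (Ring.inverse (Q s)))
          (C t + (D t).comp ((P t).comp (Ring.inverse (Q t)))
            - ((P t).comp (Ring.inverse (Q t))).comp
                (A t + (B t).comp ((P t).comp (Ring.inverse (Q t))))) t := by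
  have hQ0_isUnit : IsUnit (Q 0) := hQ0 ▸ isUnit_one
  obtain ⟨T, hT, hunit⟩ := exists_Ico_subset_of_mem_nhds
    ((hQ 0 le_rfl).continuousAt.preimage_mem_nhds (Units.isOpen.mem_nhds hQ0_isUnit)) ⟨1, one_pos⟩
  have hG0 : (P 0).comp (Ring.inverse (Q 0)) = G₀ := by
    rw [hQ0, hP0, ← one_def, Ring.inverse_one, one_def, comp_id]
  refine ⟨T, hT, hunit, hG0, fun t ht => ?_⟩
  rw [← comp_ringInverse_eq_riccati (hunit ht)]
  exact (hP t ht.1).clm_comp_ringInverse (hQ t ht.1) (hunit ht)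

/-- Operator version of the inverse problem: given a solution of the linear
base and auxiliary operator equations `∂ₜQ = A∘Q + B∘P`, `∂ₜP = C∘Q + D∘P`
with data `Q 0 = id`, `P 0 = G₀`, there is a `T > 0` on which `Q t` is
invertible and `G = P ∘ Q⁻¹` solves the operator Riccati evolution equation
`∂ₜG = C + D∘G − G∘(A + B∘G)` with `G 0 = G₀`. -/
theorem operator_riccati_solution_from_linear_data
    {V W : Type*} [NormedAddCommGroup V] [NormedSpace ℂ V] [CompleteSpace V]
    [NormedAddCommGroup W] [NormedSpace ℂ W] [CompleteSpace W]
    (A : ℝ → V →L[ℂ] V) (B : ℝ → W →L[ℂ] V)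
    (C : ℝ → V →L[ℂ] W) (D : ℝ → W →L[ℂ] W)
    (G₀ : V →L[ℂ] W)
    (Q : ℝ → V →L[ℂ] V) (P : ℝ → V →L[ℂ] W)
    (hQ : ∀ t : ℝ, 0 ≤ t → HasDerivAt Q ((A t).comp (Q t) + (B t).comp (P t)) t)
    (hP : ∀ t : ℝ, 0 ≤ t → HasDerivAt P ((C t).comp (Q t) + (D t).comp (P t)) t)
    (hQ0 : Q 0 = ContinuousLinearMap.id ℂ V) (hP0 : P 0 = G₀) :
    ∃ T : ℝ, 0 < T ∧
      (∀ t ∈ Set.Ico (0 : ℝ) T, IsUnit (Q t)) ∧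
      (P 0).comp (Ring.inverse (Q 0)) = G₀ ∧
      ∀ t ∈ Set.Ico (0 : ℝ) T,
        HasDerivAt (fun s => (P s).comp (Ring.inverse (Q s)))
          (C t + (D t).comp ((P t).comp (Ring.inverse (Q t)))
            - ((P t).comp (Ring.inverse (Q t))).comp
                (A t + (B t).comp ((P t).comp (Ring.inverse (Q t))))) t :=
  operator_riccati_solution_from_linear_data_general A B C D G₀ Q P hQ hP hQ0 hP0
end

section
/- Let q : ℝ × ℝ → ℝ (arguments (t, x)) be infinitely differentiable (ContDiff ℝ ⊤) with q(t, x) ≠ 0 for all (t, x), and suppose q solves the heat equation: for all (t, x), the partial derivative of q in t equals the second partial derivative of q in x. Define g(t, x) := (∂ₓ q)(t, x) / q(t, x). Then for all (t, x), the partial derivative of g in t satisfies ∂ₜ g(t, x) = ∂ₓ² g(t, x) + 2 · g(t, x) · ∂ₓ g(t, x). -/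
lemma sliceX_hasDerivAt (f : ℝ × ℝ → ℝ) (hf : ContDiff ℝ (⊤ : ℕ∞) f) (t x : ℝ) :
    HasDerivAt (fun y => f (t, y)) (fderiv ℝ f (t, x) (0, 1)) x := by
  have h1 : HasDerivAt (fun y : ℝ => ((t, y) : ℝ × ℝ)) ((0 : ℝ), (1 : ℝ)) x :=
    (hasDerivAt_const x t).prodMk (hasDerivAt_id x)
  exact
    ((hf.differentiable (by simp) (t, x)).hasFDerivAt).comp_hasDerivAt x h1

lemma sliceT_hasDerivAt (f : ℝ × ℝ → ℝ) (hf : ContDiff ℝ (⊤ : ℕ∞) f) (t x : ℝ) :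
    HasDerivAt (fun s => f (s, x)) (fderiv ℝ f (t, x) (1, 0)) t := by
  have h1 : HasDerivAt (fun s : ℝ => ((s, x) : ℝ × ℝ)) ((1 : ℝ), (0 : ℝ)) t :=
    (hasDerivAt_id t).prodMk (hasDerivAt_const t x)
  exact
    ((hf.differentiable (by simp) (t, x)).hasFDerivAt).comp_hasDerivAt t h1

lemma Dx_contDiff (f : ℝ × ℝ → ℝ) (hf : ContDiff ℝ (⊤ : ℕ∞) f) (v : ℝ × ℝ) :
    ContDiff ℝ (⊤ : ℕ∞) (fun p => fderiv ℝ f p v) :=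
  (hf.fderiv_right (by simp)).clm_apply contDiff_const

lemma fderiv_apply_comm (f : ℝ × ℝ → ℝ) (hf : ContDiff ℝ (⊤ : ℕ∞) f)
    (p v w : ℝ × ℝ) :
    fderiv ℝ (fun z => fderiv ℝ f z v) p w = fderiv ℝ (fun z => fderiv ℝ f z w) p v := by
  have hdf : Differentiable ℝ (fderiv ℝ f) := (hf.fderiv_right (m := (⊤ : ℕ∞)) (by simp)).differentiable (by simp)
  have key : ∀ u u' : ℝ × ℝ, fderiv ℝ (fun z => fderiv ℝ f z u) p u'
      = fderiv ℝ (fderiv ℝ f) p u' u := by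
    intro u u'
    have h : HasFDerivAt (fun z => fderiv ℝ f z u)
        ((ContinuousLinearMap.apply ℝ ℝ u).comp (fderiv ℝ (fderiv ℝ f) p)) p :=
      ((ContinuousLinearMap.apply ℝ ℝ u).hasFDerivAt).comp p (hdf p).hasFDerivAt
    rw [h.fderiv]; rfl
  rw [key v w, key w v]
  exact second_derivative_symmetric (fun y => (hf.differentiable (by simp) y).hasFDerivAt)
    (hdf p).hasFDerivAt w v

/-- Partial derivative in the first (time) variable of `f : ℝ × ℝ → ℝ`. -/
noncomputable def pderivT (f : ℝ × ℝ → ℝ) (p : ℝ × ℝ) : ℝ :=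
  deriv (fun s => f (s, p.2)) p.1

/-- Partial derivative in the second (space) variable of `f : ℝ × ℝ → ℝ`. -/
noncomputable def pderivX (f : ℝ × ℝ → ℝ) (p : ℝ × ℝ) : ℝ :=
  deriv (fun y => f (p.1, y)) p.2

/-- If `q` is a smooth nonvanishing solution of the heat equation
`∂ₜq = ∂ₓ²q`, then the Cole–Hopf-type quotient `g = ∂ₓq / q` solves
`∂ₜg = ∂ₓ²g + 2 g ∂ₓg`. -/
theorem coleHopf_quotient_solves_riccati_pde
    (q : ℝ × ℝ → ℝ) (hq : ContDiff ℝ (⊤ : ℕ∞) q) (hq0 : ∀ p : ℝ × ℝ, q p ≠ 0)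
    (hheat : ∀ p : ℝ × ℝ, pderivT q p = pderivX (pderivX q) p)
    (g : ℝ × ℝ → ℝ) (hg : ∀ p : ℝ × ℝ, g p = pderivX q p / q p) :
    ∀ p : ℝ × ℝ,
      pderivT g p = pderivX (pderivX g) p + 2 * g p * pderivX g p := by
  -- x-derivative layers
  set q1 : ℝ × ℝ → ℝ := fun z => fderiv ℝ q z (0, 1) with hq1def
  have hq1 : ContDiff ℝ (⊤ : ℕ∞) q1 := Dx_contDiff q hq _
  set q2 : ℝ × ℝ → ℝ := fun z => fderiv ℝ q1 z (0, 1) with hq2def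
  have hq2 : ContDiff ℝ (⊤ : ℕ∞) q2 := Dx_contDiff q1 hq1 _
  set q3 : ℝ × ℝ → ℝ := fun z => fderiv ℝ q2 z (0, 1) with hq3def
  have hq3 : ContDiff ℝ (⊤ : ℕ∞) q3 := Dx_contDiff q2 hq2 _
  have hpx : ∀ (f : ℝ × ℝ → ℝ), ContDiff ℝ (⊤ : ℕ∞) f → ∀ z : ℝ × ℝ,
      pderivX f z = fderiv ℝ f z (0, 1) := by
    intro f hf z
    exact (sliceX_hasDerivAt f hf z.1 z.2).deriv
  have hpt : ∀ (f : ℝ × ℝ → ℝ), ContDiff ℝ (⊤ : ℕ∞) f → ∀ z : ℝ × ℝ,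
      pderivT f z = fderiv ℝ f z (1, 0) := by
    intro f hf z
    exact (sliceT_hasDerivAt f hf z.1 z.2).deriv
  have hpxq : pderivX q = q1 := funext fun z => hpx q hq z
  have hpxq1 : pderivX q1 = q2 := funext fun z => hpx q1 hq1 z
  -- heat equation in fderiv form
  have heat' : ∀ z : ℝ × ℝ, fderiv ℝ q z (1, 0) = q2 z := by
    intro z
    rw [← hpt q hq z, hheat z, hpxq, hpxq1]
  -- Clairaut: t-derivative of q1 equals q3
  have hq1t : ∀ z : ℝ × ℝ, fderiv ℝ q1 z (1, 0) = q3 z := by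
    intro z
    have h := fderiv_apply_comm q hq z (0, 1) (1, 0)
    rw [hq1def]
    rw [h]
    have : (fun w => fderiv ℝ q w (1, 0)) = q2 := funext fun w => heat' w
    rw [this, hq3def]
  -- g as explicit quotient
  have hgfun : g = fun z => q1 z / q z := funext fun z => by rw [hg z, hpxq]
  -- pderivX g computed
  have hGx : pderivX g = fun z => (q2 z * q z - q1 z * q1 z) / q z ^ 2 := by
    funext z
    have h := (sliceX_hasDerivAt q1 hq1 z.1 z.2).div
      (sliceX_hasDerivAt q hq z.1 z.2) (hq0 (z.1, z.2))
    have h2 : pderivX g z = deriv (fun y => q1 (z.1, y) / q (z.1, y)) z.2 := by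
      rw [pderivX, hgfun]
    rw [h2, show (fun y => q1 (z.1, y) / q (z.1, y)) = ((fun y => q1 (z.1, y)) / fun y => q (z.1, y)) from rfl, h.deriv]
  intro p
  -- pderivT g
  have hT : pderivT g p = (q3 p * q p - q1 p * q2 p) / q p ^ 2 := by
    have h := (sliceT_hasDerivAt q1 hq1 p.1 p.2).div
      (sliceT_hasDerivAt q hq p.1 p.2) (hq0 (p.1, p.2))
    have h2 : pderivT g p = deriv (fun s => q1 (s, p.2) / q (s, p.2)) p.1 := by
      rw [pderivT, hgfun]
    rw [h2, show (fun s => q1 (s, p.2) / q (s, p.2)) = ((fun s => q1 (s, p.2)) / fun s => q (s, p.2)) from rfl, h.deriv, hq1t (p.1, p.2), heat' (p.1, p.2)]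
  -- pderivX (pderivX g)
  have hXX : pderivX (pderivX g) p =
      ((q3 p * q p + q2 p * q1 p - (q2 p * q1 p + q1 p * q2 p)) * q p ^ 2
        - (q2 p * q p - q1 p * q1 p) * (2 * q p ^ 1 * q1 p)) / (q p ^ 2) ^ 2 := by
    have hnum : HasDerivAt (fun y => q2 (p.1, y) * q (p.1, y) - q1 (p.1, y) * q1 (p.1, y))
        (q3 (p.1, p.2) * q (p.1, p.2) + q2 (p.1, p.2) * q1 (p.1, p.2)
          - (q2 (p.1, p.2) * q1 (p.1, p.2) + q1 (p.1, p.2) * q2 (p.1, p.2))) p.2 := by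
      exact ((sliceX_hasDerivAt q2 hq2 p.1 p.2).mul (sliceX_hasDerivAt q hq p.1 p.2)).sub
        ((sliceX_hasDerivAt q1 hq1 p.1 p.2).mul (sliceX_hasDerivAt q1 hq1 p.1 p.2))
    have hden : HasDerivAt (fun y => q (p.1, y) ^ 2)
        (2 * q (p.1, p.2) ^ 1 * q1 (p.1, p.2)) p.2 := by
      simpa using (sliceX_hasDerivAt q hq p.1 p.2).fun_pow 2
    have h := hnum.div hden (pow_ne_zero 2 (hq0 (p.1, p.2)))
    have h2 : pderivX (pderivX g) p =
        deriv (fun y => (q2 (p.1, y) * q (p.1, y) - q1 (p.1, y) * q1 (p.1, y))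
          / q (p.1, y) ^ 2) p.2 := by
      rw [pderivX, hGx]
    rw [h2, show (fun y => (q2 (p.1, y) * q (p.1, y) - q1 (p.1, y) * q1 (p.1, y)) / q (p.1, y) ^ 2) = ((fun y => q2 (p.1, y) * q (p.1, y) - q1 (p.1, y) * q1 (p.1, y)) / fun y => q (p.1, y) ^ 2) from rfl, h.deriv]
  rw [hT, hXX, hGx, hg p, hpxq]
  have h0 := hq0 p
  field_simp
  ring
end

section
/- Let q : ℝ × ℝ → ℝ (arguments (t, x)) be infinitely differentiable (ContDiff ℝ ⊤) with q(t, x) ≠ 0 for all (t, x), and suppose q solves the heat equation: for all (t, x), ∂ₜ q(t, x) = ∂ₓ² q(t, x). Define u(t, x) := −2 · (∂ₓ q)(t, x) / q(t, x) (the Cole–Hopf transformation). Then u solves Burgers' equation: for all (t, x), ∂ₜ u(t, x) + u(t, x) · ∂ₓ u(t, x) = ∂ₓ² u(t, x). -/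
section aux

variable {f : ℝ × ℝ → ℝ}

lemma hasDerivAt_sliceX (hf : Differentiable ℝ f) (t x : ℝ) :
    HasDerivAt (fun y => f (t, y)) (fderiv ℝ f (t, x) (0, 1)) x := by
  have hL : HasDerivAt (fun y : ℝ => ((t : ℝ), y)) ((0 : ℝ), (1 : ℝ)) x :=
    (hasDerivAt_const x t).prodMk (hasDerivAt_id x)
  exact (hf (t, x)).hasFDerivAt.comp_hasDerivAt x hL

lemma hasDerivAt_sliceT (hf : Differentiable ℝ f) (t x : ℝ) :
    HasDerivAt (fun s => f (s, x)) (fderiv ℝ f (t, x) (1, 0)) t := by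
  have hL : HasDerivAt (fun s : ℝ => (s, (x : ℝ))) ((1 : ℝ), (0 : ℝ)) t :=
    (hasDerivAt_id t).prodMk (hasDerivAt_const t x)
  exact (hf (t, x)).hasFDerivAt.comp_hasDerivAt t hL

lemma pderivX_eq_fderiv (hf : Differentiable ℝ f) (p : ℝ × ℝ) :
    pderivX f p = fderiv ℝ f p (0, 1) :=
  (hasDerivAt_sliceX hf p.1 p.2).deriv

lemma pderivT_eq_fderiv (hf : Differentiable ℝ f) (p : ℝ × ℝ) :
    pderivT f p = fderiv ℝ f p (1, 0) :=
  (hasDerivAt_sliceT hf p.1 p.2).deriv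

lemma contDiff_pderivX (hf : ContDiff ℝ (⊤ : ℕ∞) f) : ContDiff ℝ (⊤ : ℕ∞) (pderivX f) := by
  have h1 : ContDiff ℝ (⊤ : ℕ∞) (fun p => fderiv ℝ f p ((0 : ℝ), (1 : ℝ))) :=
    (hf.fderiv_right (by simp)).clm_apply contDiff_const
  have : pderivX f = fun p => fderiv ℝ f p (0, 1) :=
    funext fun p => pderivX_eq_fderiv (hf.differentiable (by simp)) p
  rwa [this]

lemma contDiff_pderivT (hf : ContDiff ℝ (⊤ : ℕ∞) f) : ContDiff ℝ (⊤ : ℕ∞) (pderivT f) := by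
  have h1 : ContDiff ℝ (⊤ : ℕ∞) (fun p => fderiv ℝ f p ((1 : ℝ), (0 : ℝ))) :=
    (hf.fderiv_right (by simp)).clm_apply contDiff_const
  have : pderivT f = fun p => fderiv ℝ f p (1, 0) :=
    funext fun p => pderivT_eq_fderiv (hf.differentiable (by simp)) p
  rwa [this]

lemma pderiv_comm (hf : ContDiff ℝ (⊤ : ℕ∞) f) (p : ℝ × ℝ) :
    pderivT (pderivX f) p = pderivX (pderivT f) p := by
  have hfd : Differentiable ℝ f := hf.differentiable (by simp)
  have hfd' : Differentiable ℝ (fderiv ℝ f) :=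
    (hf.fderiv_right (m := (⊤ : ℕ∞)) (by simp)).differentiable (by simp)
  have hX : Differentiable ℝ (pderivX f) := (contDiff_pderivX hf).differentiable (by simp)
  have hT : Differentiable ℝ (pderivT f) := (contDiff_pderivT hf).differentiable (by simp)
  have hsym : IsSymmSndFDerivAt ℝ f p :=
    hf.contDiffAt.isSymmSndFDerivAt (by norm_num; exact WithTop.coe_le_coe.mpr (le_top : (2 : ℕ∞) ≤ ⊤))
  have e1 : pderivT (pderivX f) p = fderiv ℝ (fderiv ℝ f) p (1, 0) (0, 1) := by
    rw [pderivT_eq_fderiv hX p]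
    have hXe : pderivX f = fun y => (ContinuousLinearMap.apply ℝ ℝ ((0:ℝ),(1:ℝ))) (fderiv ℝ f y) :=
      funext fun y => pderivX_eq_fderiv hfd y
    rw [hXe, show (fun y => (ContinuousLinearMap.apply ℝ ℝ ((0:ℝ),(1:ℝ))) (fderiv ℝ f y))
        = (⇑(ContinuousLinearMap.apply ℝ ℝ ((0:ℝ),(1:ℝ))) ∘ fderiv ℝ f) from rfl,
      fderiv_comp p (ContinuousLinearMap.apply ℝ ℝ ((0:ℝ),(1:ℝ))).differentiableAt (hfd' p)]
    simp
  have e2 : pderivX (pderivT f) p = fderiv ℝ (fderiv ℝ f) p (0, 1) (1, 0) := by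
    rw [pderivX_eq_fderiv hT p]
    have hTe : pderivT f = fun y => (ContinuousLinearMap.apply ℝ ℝ ((1:ℝ),(0:ℝ))) (fderiv ℝ f y) :=
      funext fun y => pderivT_eq_fderiv hfd y
    rw [hTe, show (fun y => (ContinuousLinearMap.apply ℝ ℝ ((1:ℝ),(0:ℝ))) (fderiv ℝ f y))
        = (⇑(ContinuousLinearMap.apply ℝ ℝ ((1:ℝ),(0:ℝ))) ∘ fderiv ℝ f) from rfl,
      fderiv_comp p (ContinuousLinearMap.apply ℝ ℝ ((1:ℝ),(0:ℝ))).differentiableAt (hfd' p)]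
    simp
  rw [e1, e2, hsym (1,0) (0,1)]

end aux


/-- Cole–Hopf: if `q` is a smooth nonvanishing solution of the heat equation
`∂ₜq = ∂ₓ²q`, then `u = −2 ∂ₓq / q` solves Burgers' equation
`∂ₜu + u ∂ₓu = ∂ₓ²u`. -/
theorem coleHopf_solves_burgers
    (q : ℝ × ℝ → ℝ) (hq : ContDiff ℝ (⊤ : ℕ∞) q) (hq0 : ∀ p : ℝ × ℝ, q p ≠ 0)
    (hheat : ∀ p : ℝ × ℝ, pderivT q p = pderivX (pderivX q) p)
    (u : ℝ × ℝ → ℝ) (hu : ∀ p : ℝ × ℝ, u p = -2 * pderivX q p / q p) :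
    ∀ p : ℝ × ℝ,
      pderivT u p + u p * pderivX u p = pderivX (pderivX u) p := by
  set Q1 := pderivX q with hQ1
  set Q2 := pderivX Q1 with hQ2
  set Q3 := pderivX Q2 with hQ3
  have hq1 : ContDiff ℝ (⊤ : ℕ∞) Q1 := contDiff_pderivX hq
  have hq2 : ContDiff ℝ (⊤ : ℕ∞) Q2 := contDiff_pderivX hq1
  have hqd : Differentiable ℝ q := hq.differentiable (by simp)
  have hq1d : Differentiable ℝ Q1 := hq1.differentiable (by simp)
  have hq2d : Differentiable ℝ Q2 := hq2.differentiable (by simp)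
  -- slice derivatives in x
  have sX : ∀ (g : ℝ × ℝ → ℝ), Differentiable ℝ g → ∀ t x : ℝ,
      HasDerivAt (fun y => g (t, y)) (pderivX g (t, x)) x := by
    intro g hg t x
    have := hasDerivAt_sliceX hg t x
    rwa [← pderivX_eq_fderiv hg (t, x)] at this
  -- time derivatives of q and Q1
  have htq : ∀ p : ℝ × ℝ, pderivT q p = Q2 p := hheat
  have htq1 : ∀ p : ℝ × ℝ, pderivT Q1 p = Q3 p := by
    intro p
    rw [pderiv_comm hq p]
    have : pderivT q = Q2 := funext htq
    rw [this]
  -- formula for pderivX u everywhere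
  have hux : ∀ p : ℝ × ℝ,
      pderivX u p = (-2 * Q2 p * q p + 2 * Q1 p ^ 2) / (q p) ^ 2 := by
    rintro ⟨t, x⟩
    have hN : HasDerivAt (fun y => -2 * Q1 (t, y)) (-2 * Q2 (t, x)) x :=
      (sX Q1 hq1d t x).const_mul (-2)
    have hD : HasDerivAt (fun y => q (t, y)) (Q1 (t, x)) x := sX q hqd t x
    have h : HasDerivAt (fun y => -2 * Q1 (t, y) / q (t, y)) _ x := hN.div hD (hq0 (t, x))
    have heq : (fun y => u (t, y)) = fun y => -2 * Q1 (t, y) / q (t, y) :=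
      funext fun y => hu (t, y)
    have : pderivX u (t, x) = deriv (fun y => u (t, y)) x := rfl
    rw [this, heq, h.deriv]
    have h0 := hq0 (t, x)
    field_simp
    ring
  rintro ⟨t, x⟩
  have h0 : ∀ y : ℝ, q (t, y) ≠ 0 := fun y => hq0 (t, y)
  -- second x-derivative of u
  have huxx : pderivX (pderivX u) (t, x) =
      ((-2 * Q3 (t,x) * q (t,x) - 2 * Q2 (t,x) * Q1 (t,x) + 4 * Q1 (t,x) * Q2 (t,x)) * q (t,x) ^ 2
        - (-2 * Q2 (t,x) * q (t,x) + 2 * Q1 (t,x) ^ 2) * (2 * q (t,x) * Q1 (t,x))) / (q (t,x) ^ 2) ^ 2 := by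
    have heq : (fun y => pderivX u (t, y)) =
        fun y => (-2 * Q2 (t, y) * q (t, y) + 2 * Q1 (t, y) ^ 2) / (q (t, y)) ^ 2 :=
      funext fun y => hux (t, y)
    have hN : HasDerivAt (fun y => -2 * Q2 (t, y) * q (t, y) + 2 * Q1 (t, y) ^ 2)
        (-2 * Q3 (t,x) * q (t,x) + -2 * Q2 (t,x) * Q1 (t,x) + 2 * (2 * Q1 (t,x) * Q2 (t,x))) x := by
      exact (((sX Q2 hq2d t x).const_mul (-2)).mul (sX q hqd t x)).add
        ((((sX Q1 hq1d t x).pow 2).const_mul 2).congr_deriv (by ring))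
    have hD : HasDerivAt (fun y => (q (t, y)) ^ 2) (2 * q (t,x) * Q1 (t,x)) x := by
      have : HasDerivAt (fun y => (q (t, y)) ^ 2) _ x := (sX q hqd t x).pow 2
      convert this using 1; push_cast; ring
    have h : HasDerivAt (fun y => (-2 * Q2 (t, y) * q (t, y) + 2 * Q1 (t, y) ^ 2) / (q (t, y)) ^ 2) _ x :=
      hN.div hD (pow_ne_zero 2 (h0 x))
    have : pderivX (pderivX u) (t, x) = deriv (fun y => pderivX u (t, y)) x := rfl
    rw [this, heq, h.deriv]
    ring_nf
  -- time derivative of u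
  have hut : pderivT u (t, x) =
      (-2 * Q3 (t,x) * q (t,x) - (-2 * Q1 (t,x)) * Q2 (t,x)) / (q (t,x)) ^ 2 := by
    have sT : ∀ (g : ℝ × ℝ → ℝ), Differentiable ℝ g →
        HasDerivAt (fun s => g (s, x)) (pderivT g (t, x)) t := by
      intro g hg
      have := hasDerivAt_sliceT hg t x
      rwa [← pderivT_eq_fderiv hg (t, x)] at this
    have hN : HasDerivAt (fun s => -2 * Q1 (s, x)) (-2 * Q3 (t, x)) t := by
      have := (sT Q1 hq1d).const_mul (-2)
      rwa [htq1 (t, x)] at this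
    have hD : HasDerivAt (fun s => q (s, x)) (Q2 (t, x)) t := by
      have := sT q hqd
      rwa [htq (t, x)] at this
    have h : HasDerivAt (fun s => -2 * Q1 (s, x) / q (s, x)) _ t := hN.div hD (h0 x)
    have heq : (fun s => u (s, x)) = fun s => -2 * Q1 (s, x) / q (s, x) :=
      funext fun s => hu (s, x)
    have : pderivT u (t, x) = deriv (fun s => u (s, x)) t := rfl
    rw [this, heq, h.deriv]
  rw [hut, huxx, hu (t, x), hux (t, x)]
  have h0x := h0 x
  field_simp
  ring
end
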